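/- arXiv:1904.01621 — 4 statements merged into one kernel-verified Lean document; each statement's English description precedes it below -/
import Mathlib

section
/- Let tilde-U^ı be the subalgebra of tilde-U generated by B_i = F_i + E_{τi} K̃_i' and k̃_i = K̃_i K̃_{τi}' for i ∈ I, where τ is a Cartan involution with c_{i,τi} = 0. Then for every i with τi = i, the element k̃_i is central in tilde-U^ı, and for every i with τi ≠ i, the element k̃_i k̃_{τi} is central in tilde-U^ı. -/
/-!
`k̃ i` skew-commutes with `B j` with the factor `v ^ (c (τ i) j - c i j)`: the two summands
`F j` and `E (τ j) * K' j` of `B j` pick up the same factor because `c` is `τ`-invariant.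
This factor is `1` when `τ i = i`, and for `k̃ i * k̃ (τ i)` the two factors cancel since
`τ` is an involution. The `k̃ j` commute with each other, and an element commuting with a
generating set commutes with the whole subalgebra.
-/

def SkewCommute {R A : Type*} [Mul A] [SMul R A] (r : R) (a x : A) : Prop :=
  a * x = r • (x * a)

namespace SkewCommute

variable {R A : Type*} [CommSemiring R] [Semiring A] [Algebra R A] {r s : R} {a b x y : A}

theorem of_commute (h : Commute a x) : SkewCommute (1 : R) a x := by
  rw [SkewCommute, one_smul, h.eq]

theorem commute (h : SkewCommute (1 : R) a x) : Commute a x := by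
  rw [Commute, SemiconjBy, h, one_smul]

theorem mul_left (ha : SkewCommute r a x) (hb : SkewCommute s b x) :
    SkewCommute (r * s) (a * b) x := by
  rw [SkewCommute, mul_assoc, hb, mul_smul_comm, ← mul_assoc, ha, smul_mul_assoc, smul_smul,
    mul_assoc, mul_comm s]

theorem mul_right (hx : SkewCommute r a x) (hy : SkewCommute s a y) :
    SkewCommute (r * s) a (x * y) := by
  rw [SkewCommute, ← mul_assoc, hx, smul_mul_assoc, mul_assoc, hy, mul_smul_comm, smul_smul,
    mul_assoc]

theorem add_right (hx : SkewCommute r a x) (hy : SkewCommute r a y) :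
    SkewCommute r a (x + y) := by
  rw [SkewCommute, mul_add, hx, hy, add_mul, smul_add]

end SkewCommute

section QuantumGroup

variable {R A I : Type*} [CommRing R] [Ring A] [Algebra R A] (v : Rˣ) (c : I → I → ℤ)
  (E F K K' : I → A)

theorem skewCommute_K_mul_K'_F
    (hKF : ∀ i j, K i * F j = (((v ^ (-(c i j)) : Rˣ)) : R) • (F j * K i))
    (hK'F : ∀ i j, K' i * F j = (((v ^ (c i j) : Rˣ)) : R) • (F j * K' i)) (i k j : I) :
    SkewCommute (((v ^ (c k j - c i j) : Rˣ)) : R) (K i * K' k) (F j) := by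
  have hK : SkewCommute _ (K i) (F j) := hKF i j
  have h := hK.mul_left (hK'F k j)
  rwa [← Units.val_mul, ← zpow_add, neg_add_eq_sub] at h

theorem skewCommute_K_mul_K'_E_mul_K'
    (hK'K' : ∀ i j, K' i * K' j = K' j * K' i) (hKK' : ∀ i j, K i * K' j = K' j * K i)
    (hKE : ∀ i j, K i * E j = (((v ^ (c i j) : Rˣ)) : R) • (E j * K i))
    (hK'E : ∀ i j, K' i * E j = (((v ^ (-(c i j)) : Rˣ)) : R) • (E j * K' i)) (i k l j : I) :
    SkewCommute (((v ^ (c i l - c k l) : Rˣ)) : R) (K i * K' k) (E l * K' j) := by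
  have hK : SkewCommute _ (K i) (E l) := hKE i l
  have hE := hK.mul_left (hK'E k l)
  have hK' : Commute (K i * K' k) (K' j) := Commute.mul_left (hKK' i j) (hK'K' k j)
  have h := hE.mul_right (SkewCommute.of_commute (R := R) hK')
  rwa [mul_one, ← Units.val_mul, ← zpow_add, ← sub_eq_add_neg] at h

theorem commute_K_mul_K' (hKK : ∀ i j, K i * K j = K j * K i)
    (hKK' : ∀ i j, K i * K' j = K' j * K i) (hK'K' : ∀ i j, K' i * K' j = K' j * K' i)
    (i k j l : I) : Commute (K i * K' k) (K j * K' l) :=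
  (Commute.mul_left (hKK i j) (hKK' j k).symm).mul_right
    (Commute.mul_left (hKK' i l) (hK'K' k l))

end QuantumGroup

theorem ktilde_central_in_iQuantumGroup_general
    {R A I : Type*} [CommRing R] [Ring A] [Algebra R A]
    (v : Rˣ) (c : I → I → ℤ) (τ : I → I)
    (hτ : ∀ i, τ (τ i) = i)
    (hcττ : ∀ i j, c (τ i) (τ j) = c i j)
    (E F K K' : I → A)
    (hKK : ∀ i j, K i * K j = K j * K i)
    (hKK' : ∀ i j, K i * K' j = K' j * K i)
    (hK'K' : ∀ i j, K' i * K' j = K' j * K' i)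
    (hKE : ∀ i j, K i * E j = (((v ^ (c i j) : Rˣ)) : R) • (E j * K i))
    (hKF : ∀ i j, K i * F j = (((v ^ (-(c i j)) : Rˣ)) : R) • (F j * K i))
    (hK'E : ∀ i j, K' i * E j = (((v ^ (-(c i j)) : Rˣ)) : R) • (E j * K' i))
    (hK'F : ∀ i j, K' i * F j = (((v ^ (c i j) : Rˣ)) : R) • (F j * K' i)) :
    ∀ i : I,
      (τ i = i → ∀ x ∈ Algebra.adjoin R
          (Set.range (fun j => F j + E (τ j) * K' j)
            ∪ Set.range (fun j => K j * K' (τ j))),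
        Commute (K i * K' (τ i)) x) ∧
      (τ i ≠ i → ∀ x ∈ Algebra.adjoin R
          (Set.range (fun j => F j + E (τ j) * K' j)
            ∪ Set.range (fun j => K j * K' (τ j))),
        Commute ((K i * K' (τ i)) * (K (τ i) * K' (τ (τ i)))) x) := by
  have hB : ∀ i j, SkewCommute (((v ^ (c (τ i) j - c i j) : Rˣ)) : R)
      (K i * K' (τ i)) (F j + E (τ j) * K' j) := fun i j => by
    have hE := skewCommute_K_mul_K'_E_mul_K' v c E K K' hK'K' hKK' hKE hK'E i (τ i) (τ j) j
    rw [hcττ, ← hcττ i, hτ] at hE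
    exact (skewCommute_K_mul_K'_F v c F K K' hKF hK'F i (τ i) j).add_right hE
  have hk := commute_K_mul_K' K K' hKK hKK' hK'K'
  refine fun i => ⟨fun hi _ hx => ?_, fun _ _ hx => ?_⟩ <;>
    refine Algebra.commute_of_mem_adjoin_of_forall_mem_commute hx ?_ <;>
    rintro _ (⟨j, rfl⟩ | ⟨j, rfl⟩)
  · have hexp : c (τ i) j - c i j = 0 := by rw [hi, sub_self]
    have h := hB i j
    rw [hexp, zpow_zero, Units.val_one] at h
    exact h.commute
  · exact hk _ _ _ _
  · have hexp : c (τ i) j - c i j + (c (τ (τ i)) j - c (τ i) j) = 0 := by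
      rw [hτ, sub_add_sub_cancel, sub_self]
    have h := (hB i j).mul_left (hB (τ i) j)
    rw [← Units.val_mul, ← zpow_add, hexp, zpow_zero, Units.val_one] at h
    exact h.commute
  · exact (hk _ _ _ _).mul_left (hk _ _ _ _)

/-- Let `tilde-U^ı` be the subalgebra of the (Drinfeld-double-type) quantum
group `tilde-U` generated by `B i = F i + E (τ i) * K' i` and `k̃ i = K i * K' (τ i)` for
`i ∈ I`, where `τ` is a Cartan involution with `c i (τ i) = 0`.  Then for every `i` with
`τ i = i` the element `k̃ i` is central in `tilde-U^ı`, and for every `i` with `τ i ≠ i` the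
element `k̃ i * k̃ (τ i)` is central in `tilde-U^ı`. -/
theorem ktilde_central_in_iQuantumGroup
    {R A I : Type*} [CommRing R] [Ring A] [Algebra R A] [DecidableEq I]
    (v : Rˣ) (c : I → I → ℤ) (τ : I → I)
    (hcsym : ∀ i j, c i j = c j i)
    (hτ : ∀ i, τ (τ i) = i)
    (hcττ : ∀ i j, c (τ i) (τ j) = c i j)
    (hciτ : ∀ i, c i (τ i) = 0)
    (E F K K' Kinv K'inv : I → A)
    (hEF : ∀ i j, ((v : R) - ((v⁻¹ : Rˣ) : R)) • (E i * F j - F j * E i)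
      = if i = j then K i - K' i else 0)
    (hKK : ∀ i j, K i * K j = K j * K i)
    (hKK' : ∀ i j, K i * K' j = K' j * K i)
    (hK'K' : ∀ i j, K' i * K' j = K' j * K' i)
    (hKE : ∀ i j, K i * E j = (((v ^ (c i j) : Rˣ)) : R) • (E j * K i))
    (hKF : ∀ i j, K i * F j = (((v ^ (-(c i j)) : Rˣ)) : R) • (F j * K i))
    (hK'E : ∀ i j, K' i * E j = (((v ^ (-(c i j)) : Rˣ)) : R) • (E j * K' i))
    (hK'F : ∀ i j, K' i * F j = (((v ^ (c i j) : Rˣ)) : R) • (F j * K' i))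
    (hKinv : ∀ i, K i * Kinv i = 1 ∧ Kinv i * K i = 1)
    (hK'inv : ∀ i, K' i * K'inv i = 1 ∧ K'inv i * K' i = 1) :
    ∀ i : I,
      (τ i = i → ∀ x ∈ Algebra.adjoin R
          (Set.range (fun j => F j + E (τ j) * K' j)
            ∪ Set.range (fun j => K j * K' (τ j))),
        Commute (K i * K' (τ i)) x) ∧
      (τ i ≠ i → ∀ x ∈ Algebra.adjoin R
          (Set.range (fun j => F j + E (τ j) * K' j)
            ∪ Set.range (fun j => K j * K' (τ j))),
        Commute ((K i * K' (τ i)) * (K (τ i) * K' (τ (τ i)))) x) :=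
  ktilde_central_in_iQuantumGroup_general v c τ hτ hcττ E F K K' hKK hKK' hK'K' hKE hKF hK'E hK'F
end

section
/- Let Q be an acyclic quiver and ℓ a sink of Q. For any indecomposable representation L of Q over a field k with L not isomorphic to the simple S_ℓ, the reflected representation F_ℓ^+(L) at the sink ℓ is indecomposable with dimension vector s_ℓ(dim L), where s_ℓ is the simple reflection at ℓ; and F_ℓ^+(S_ℓ) = 0. -/
/-- A representation `(M, f)` of a quiver with vertices `V`, arrows `A` and source/target
maps `s`, `t` is indecomposable: it is nonzero, and every idempotent endomorphism is `0`
or the identity. -/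
def QuiverRep.Indecomposable (k : Type*) [Field k] {V A : Type*} (s t : A → V)
    (M : V → Type*) [∀ v, AddCommGroup (M v)] [∀ v, Module k (M v)]
    (f : ∀ a, M (s a) →ₗ[k] M (t a)) : Prop :=
  (¬ ∀ v, Subsingleton (M v)) ∧
    ∀ φ : ∀ v, M v →ₗ[k] M v,
      (∀ a x, φ (t a) (f a x) = f a (φ (s a) x)) →
      (∀ v x, φ v (φ v x) = φ v x) →
      (∀ v, φ v = 0) ∨ (∀ v, φ v = LinearMap.id)

/-- A representation is isomorphic to the simple representation `S_ℓ` concentrated at the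
vertex `ℓ`. -/
def QuiverRep.IsoSimpleAt (k : Type*) [Field k] {V : Type*} (ℓ : V)
    (M : V → Type*) [∀ v, AddCommGroup (M v)] [∀ v, Module k (M v)] : Prop :=
  (∀ v, v ≠ ℓ → Subsingleton (M v)) ∧ Nonempty (M ℓ ≃ₗ[k] k)

/-! Write `Φ : ⊕_{t a = ℓ} M (s a) → M ℓ` for the sum of the arrows into the sink `ℓ`, so that
`N ℓ ≅ ker Φ`. If `Φ` were not onto, the projection of `M ℓ` onto a complement of its image,
extended by zero, would be an idempotent endomorphism of `M`; indecomposability then forces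
`M ≅ S_ℓ`. Once `Φ` is onto, rank–nullity gives the dimension vector, and an idempotent
endomorphism `ψ` of `N` transfers to one of `M`: away from `ℓ` by conjugation with `e`, and at `ℓ`
by descending the diagonal idempotent of `⊕ M (s a)` along `Φ`, which preserves `ker Φ` because
`ψ` commutes with the reversed arrows. So the transferred idempotent is `0` or `1`, and so is `ψ`,
since `ι` is injective. -/

open Function

section LinearAlgebra

theorem Module.subsingleton_of_zero_eq_id {R W : Type*} [Semiring R] [AddCommMonoid W]
    [Module R W] (h : (0 : W →ₗ[R] W) = LinearMap.id) : Subsingleton W :=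
  ⟨fun x y => by simpa using (LinearMap.congr_fun h x).symm.trans (LinearMap.congr_fun h y)⟩

theorem Module.finrank_eq_one_of_isIdempotentElem {K W : Type*} [DivisionRing K] [AddCommGroup W]
    [Module K W] [Nontrivial W]
    (h : ∀ p : Module.End K W, IsIdempotentElem p → p = 0 ∨ p = 1) :
    Module.finrank K W = 1 := by
  obtain ⟨x, hx⟩ := exists_ne (0 : W)
  obtain ⟨C, hC⟩ := (K ∙ x).exists_isCompl
  have hpx : (K ∙ x).projection C hC x = x :=
    Submodule.projection_apply_of_mem_left hC (Submodule.mem_span_singleton_self x)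
  rcases h _ (Submodule.isIdempotentElem_projection hC) with h0 | h1
  · exact absurd (hpx.symm.trans (by rw [h0, LinearMap.zero_apply])) hx
  · have hspan : (K ∙ x) = ⊤ := by
      rw [← Submodule.range_projection hC, h1, Module.End.one_eq_id, LinearMap.range_id]
    rw [← finrank_top K W, ← hspan, finrank_span_singleton hx]

theorem LinearMap.exists_isIdempotentElem_comp_eq_of_surjective {R X Y : Type*} [Ring R]
    [AddCommGroup X] [Module R X] [AddCommGroup Y] [Module R Y] {Φ : X →ₗ[R] Y}
    (hΦ : Surjective Φ) {Ψ : Module.End R X} (hΨ : IsIdempotentElem Ψ)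
    (hker : LinearMap.ker Φ ≤ LinearMap.ker (Φ ∘ₗ Ψ)) :
    ∃ q : Module.End R Y, IsIdempotentElem q ∧ q ∘ₗ Φ = Φ ∘ₗ Ψ := by
  set q := (LinearMap.ker Φ).liftQ (Φ ∘ₗ Ψ) hker ∘ₗ
    (Φ.quotKerEquivOfSurjective hΦ).symm.toLinearMap
  have hq : ∀ x, q (Φ x) = Φ (Ψ x) := fun x => by
    simp [q, (LinearEquiv.symm_apply_eq _).2 (Φ.quotKerEquivOfSurjective_apply_mk hΦ x).symm]
  refine ⟨q, LinearMap.ext fun y => ?_, LinearMap.ext hq⟩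
  obtain ⟨x, rfl⟩ := hΦ y
  rw [Module.End.mul_apply, hq, hq, ← Module.End.mul_apply Ψ, hΨ.eq]

theorem Module.finrank_add_finrank_of_exact {K X Y Z : Type*} [DivisionRing K]
    [AddCommGroup X] [Module K X] [AddCommGroup Y] [Module K Y] [AddCommGroup Z] [Module K Z]
    [FiniteDimensional K Y] {ι : X →ₗ[K] Y} {Φ : Y →ₗ[K] Z} (hι : Function.Injective ι)
    (hexact : Exact ι Φ) (hΦ : Surjective Φ) :
    Module.finrank K X + Module.finrank K Z = Module.finrank K Y := by
  rw [← LinearMap.finrank_range_add_finrank_ker Φ, LinearMap.range_eq_top.2 hΦ, finrank_top,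
    LinearMap.exact_iff.1 hexact, LinearMap.finrank_range_of_inj hι, add_comm]

end LinearAlgebra

namespace QuiverRep

section Cast

variable (k : Type*) [Semiring k] {V : Type*} (F : V → Type*) [∀ v, AddCommMonoid (F v)]
  [∀ v, Module k (F v)]

def castLinearEquiv {u v : V} (h : u = v) : F u ≃ₗ[k] F v :=
  h ▸ LinearEquiv.refl k (F u)

theorem castLinearEquiv_apply {u v : V} (h : u = v) (x : F u) :
    castLinearEquiv k F h x = cast (congrArg F h) x := by
  subst h; rfl

variable {k F} {G : V → Type*} [∀ v, AddCommMonoid (G v)] [∀ v, Module k (G v)]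

theorem apply_cast (φ : ∀ v, F v →ₗ[k] G v) {u v : V} (h : u = v) (x : F u) :
    φ v (cast (congrArg F h) x) = cast (congrArg G h) (φ u x) := by
  subst h; rfl

end Cast

section Sink

variable {k : Type*} [Semiring k] {V A : Type*} [DecidableEq V] [Fintype A] {s t : A → V}
  {M : V → Type*} [∀ v, AddCommMonoid (M v)] [∀ v, Module k (M v)]

def sinkMap (ℓ : V) (f : ∀ a, M (s a) →ₗ[k] M (t a)) :
    ((a : {a : A // t a = ℓ}) → M (s a.1)) →ₗ[k] M ℓ :=
  ∑ a : {a : A // t a = ℓ}, (castLinearEquiv k M a.2).toLinearMap ∘ₗ f a.1 ∘ₗ LinearMap.proj a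

variable {ℓ : V} {f : ∀ a, M (s a) →ₗ[k] M (t a)}

theorem sinkMap_apply (x : (a : {a : A // t a = ℓ}) → M (s a.1)) :
    sinkMap ℓ f x = ∑ a, cast (congrArg M a.2) (f a.1 (x a)) := by
  simp [sinkMap, castLinearEquiv_apply]

theorem sinkMap_single [DecidableEq A] (b : {a : A // t a = ℓ}) (x : M (s b.1)) :
    sinkMap ℓ f (Pi.single b x) = cast (congrArg M b.2) (f b.1 x) := by
  rw [sinkMap, LinearMap.sum_apply, Finset.sum_eq_single b (fun c _ hc => by simp [hc])
    (fun hb => absurd (Finset.mem_univ b) hb)]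
  simp [castLinearEquiv_apply]

theorem update_commute_of_sink (hsink : ∀ a, s a ≠ ℓ) {φ₀ : ∀ v, M v →ₗ[k] M v}
    (hφ₀ : ∀ a, t a ≠ ℓ → ∀ x, φ₀ (t a) (f a x) = f a (φ₀ (s a) x)) {q : M ℓ →ₗ[k] M ℓ}
    (hq : q ∘ₗ sinkMap ℓ f = sinkMap ℓ f ∘ₗ LinearMap.piMap (fun b => φ₀ (s b.1)))
    (a : A) (x : M (s a)) :
    update φ₀ ℓ q (t a) (f a x) = f a (update φ₀ ℓ q (s a) x) := by
  classical
  rw [update_of_ne (hsink a)]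
  by_cases h : t a = ℓ
  · rw [← cast_inj (congrArg M h), ← apply_cast _ h, update_self, ← sinkMap_single ⟨a, h⟩,
      ← sinkMap_single ⟨a, h⟩, ← LinearMap.comp_apply, hq, LinearMap.comp_apply]
    congr 1
    funext b
    exact Pi.apply_single (fun b => φ₀ (s b.1)) (fun b => map_zero _) _ _ b
  · rw [update_of_ne h]
    exact hφ₀ a h x

theorem update_idempotent {φ₀ : ∀ v, M v →ₗ[k] M v}
    (hφ₀ : ∀ v, v ≠ ℓ → ∀ x, φ₀ v (φ₀ v x) = φ₀ v x) {q : M ℓ →ₗ[k] M ℓ}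
    (hq : IsIdempotentElem q) (v : V) (x : M v) :
    update φ₀ ℓ q v (update φ₀ ℓ q v x) = update φ₀ ℓ q v x := by
  rcases eq_or_ne v ℓ with rfl | h
  · rw [update_self]
    exact LinearMap.congr_fun hq.eq x
  · simp only [update_of_ne h, hφ₀ v h]

theorem subsingleton_of_sinkMap_surjective (hsink : ∀ a, s a ≠ ℓ)
    (hsurj : Surjective (sinkMap ℓ f)) (hsub : ∀ v, v ≠ ℓ → Subsingleton (M v)) (v : V) :
    Subsingleton (M v) := by
  rcases eq_or_ne v ℓ with rfl | hv
  · have : ∀ a : {a : A // t a = v}, Subsingleton (M (s a.1)) := fun a => hsub _ (hsink a.1)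
    exact hsurj.subsingleton
  · exact hsub v hv

end Sink

section Indecomposable

variable {k : Type*} [Field k] {V A : Type*} [DecidableEq V] [Fintype A] {s t : A → V} {ℓ : V}
  {M : V → Type*} [∀ v, AddCommGroup (M v)] [∀ v, Module k (M v)]
  {f : ∀ a, M (s a) →ₗ[k] M (t a)}

theorem Indecomposable.eq_zero_or_subsingleton_of_comp_sinkMap_eq_zero
    (hM : Indecomposable k s t M f) (hsink : ∀ a, s a ≠ ℓ) {p : Module.End k (M ℓ)}
    (hp : IsIdempotentElem p) (hpΦ : p ∘ₗ sinkMap ℓ f = 0) :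
    p = 0 ∨ p = LinearMap.id ∧ ∀ v, v ≠ ℓ → Subsingleton (M v) := by
  have hcomm := update_commute_of_sink (f := f) (φ₀ := 0) hsink (fun _ _ _ => by simp)
    (by rw [hpΦ]; ext; exact (map_zero (sinkMap ℓ f)).symm)
  rcases hM.2 _ hcomm (update_idempotent (fun _ _ _ => rfl) hp) with h0 | hid
  · left
    simpa using h0 ℓ
  · refine .inr ⟨by simpa using hid ℓ, fun v hv => Module.subsingleton_of_zero_eq_id (R := k) ?_⟩
    simpa [update_of_ne hv] using hid v

theorem Indecomposable.isoSimpleAt_of_subsingleton [∀ v, FiniteDimensional k (M v)]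
    (hM : Indecomposable k s t M f) (hsink : ∀ a, s a ≠ ℓ)
    (hsub : ∀ v, v ≠ ℓ → Subsingleton (M v)) : IsoSimpleAt k ℓ M := by
  have : Nontrivial (M ℓ) := by
    rw [← not_subsingleton_iff_nontrivial]
    exact fun h => hM.1 fun v => if hv : v = ℓ then hv ▸ h else hsub v hv
  have : ∀ a : {a : A // t a = ℓ}, Subsingleton (M (s a.1)) := fun a => hsub _ (hsink a.1)
  refine ⟨hsub, ⟨LinearEquiv.ofFinrankEq _ _ ?_⟩⟩
  rw [Module.finrank_self]
  refine Module.finrank_eq_one_of_isIdempotentElem fun p hp => ?_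
  have hpΦ : p ∘ₗ sinkMap ℓ f = 0 := LinearMap.ext fun x => by simp [Subsingleton.elim x 0]
  exact (hM.eq_zero_or_subsingleton_of_comp_sinkMap_eq_zero hsink hp hpΦ).imp_right And.left

theorem Indecomposable.sinkMap_surjective [∀ v, FiniteDimensional k (M v)]
    (hM : Indecomposable k s t M f) (hsink : ∀ a, s a ≠ ℓ) (hS : ¬ IsoSimpleAt k ℓ M) :
    Surjective (sinkMap ℓ f) := by
  obtain ⟨C, hC⟩ := (LinearMap.range (sinkMap ℓ f)).exists_isCompl
  have hpΦ : C.projection _ hC.symm ∘ₗ sinkMap ℓ f = 0 :=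
    LinearMap.ext fun x => by simp
  rcases hM.eq_zero_or_subsingleton_of_comp_sinkMap_eq_zero hsink
    (Submodule.isIdempotentElem_projection hC.symm) hpΦ with h0 | ⟨-, hsub⟩
  · rw [← Submodule.range_projection hC.symm, h0, LinearMap.range_zero] at hC
    exact LinearMap.range_eq_top.1 (eq_top_of_isCompl_bot hC)
  · exact absurd (hM.isoSimpleAt_of_subsingleton hsink hsub) hS

end Indecomposable

section Reflection

variable {k : Type*} [Field k] {V A : Type*} {s t : A → V} {ℓ : V}
  {M : V → Type*} [∀ v, AddCommGroup (M v)] [∀ v, Module k (M v)]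
  {f : ∀ a, M (s a) →ₗ[k] M (t a)} {s' t' : A → V}
  {N : V → Type*} [∀ v, AddCommGroup (N v)] [∀ v, Module k (N v)]
  {g : ∀ a, N (s' a) →ₗ[k] N (t' a)} {ι : N ℓ →ₗ[k] ((a : {a : A // t a = ℓ}) → M (s a.1))}

theorem subsingleton_of_isoSimpleAt (hsink : ∀ a, s a ≠ ℓ)
    (e : ∀ v, v ≠ ℓ → (N v ≃ₗ[k] M v)) (hι : Injective ι) (hS : IsoSimpleAt k ℓ M)
    (v : V) : Subsingleton (N v) := by
  rcases eq_or_ne v ℓ with rfl | hv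
  · have : ∀ a : {a : A // t a = v}, Subsingleton (M (s a.1)) := fun a => hS.1 _ (hsink a.1)
    exact hι.subsingleton
  · have := hS.1 v hv
    exact (e v hv).toEquiv.subsingleton

variable [DecidableEq V]

def conjAway (e : ∀ v, v ≠ ℓ → (N v ≃ₗ[k] M v)) (ψ : ∀ v, N v →ₗ[k] N v) (v : V) :
    M v →ₗ[k] M v :=
  if h : v = ℓ then 0 else (e v h).conj (ψ v)

variable {e : ∀ v, v ≠ ℓ → (N v ≃ₗ[k] M v)}

theorem conjAway_of_ne (ψ : ∀ v, N v →ₗ[k] N v) {v : V} (h : v ≠ ℓ) :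
    conjAway e ψ v = (e v h).conj (ψ v) :=
  dif_neg h

variable (hsink : ∀ a, s a ≠ ℓ)
  (hrev1 : ∀ a, ∀ _ : t a = ℓ, s' a = ℓ ∧ t' a = s a)
  (hrev2 : ∀ a, ∀ _ : t a ≠ ℓ, s' a = s a ∧ t' a = t a)

theorem ι_map_eq_piMap_conjAway
    (hsq2 : ∀ a, ∀ h : t a = ℓ, ∀ x : N (s' a),
      e (s a) (hsink a) (cast (congrArg N (hrev1 a h).2) (g a x))
        = ι (cast (congrArg N (hrev1 a h).1) x) ⟨a, h⟩)
    {ψ : ∀ v, N v →ₗ[k] N v} (hψ : ∀ a x, ψ (t' a) (g a x) = g a (ψ (s' a) x)) (z : N ℓ) :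
    ι (ψ ℓ z) = LinearMap.piMap (fun b => conjAway e ψ (s b.1)) (ι z) := by
  funext ⟨a, h⟩
  have hι : ∀ y : N ℓ, ι y ⟨a, h⟩ = e (s a) (hsink a) (cast (congrArg N (hrev1 a h).2)
      (g a (cast (congrArg N (hrev1 a h).1.symm) y))) := fun y => by
    rw [hsq2, cast_cast, cast_eq]
  change ι (ψ ℓ z) ⟨a, h⟩ = conjAway e ψ (s a) (ι z ⟨a, h⟩)
  rw [conjAway_of_ne ψ (hsink a), LinearEquiv.conj_apply_apply, hι, hι,
    LinearEquiv.symm_apply_apply, apply_cast ψ (hrev1 a h).2, hψ, apply_cast ψ (hrev1 a h).1.symm]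

theorem conjAway_commute_of_ne
    (hsq1 : ∀ a, ∀ h : t a ≠ ℓ, ∀ x : N (s' a),
      e (t a) h (cast (congrArg N (hrev2 a h).2) (g a x))
        = f a (e (s a) (hsink a) (cast (congrArg N (hrev2 a h).1) x)))
    {ψ : ∀ v, N v →ₗ[k] N v} (hψ : ∀ a x, ψ (t' a) (g a x) = g a (ψ (s' a) x))
    (a : A) (h : t a ≠ ℓ) (x : M (s a)) :
    conjAway e ψ (t a) (f a x) = f a (conjAway e ψ (s a) x) := by
  have hf : ∀ y : N (s a), f a (e (s a) (hsink a) y) = e (t a) h (cast (congrArg N (hrev2 a h).2)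
      (g a (cast (congrArg N (hrev2 a h).1.symm) y))) := fun y => by
    rw [hsq1, cast_cast, cast_eq]
  obtain ⟨y, rfl⟩ := (e (s a) (hsink a)).surjective x
  rw [conjAway_of_ne ψ h, conjAway_of_ne ψ (hsink a), LinearEquiv.conj_apply_apply,
    LinearEquiv.conj_apply_apply, hf, hf, LinearEquiv.symm_apply_apply,
    LinearEquiv.symm_apply_apply, apply_cast ψ (hrev2 a h).2, hψ, apply_cast ψ (hrev2 a h).1.symm]

theorem eq_of_conjAway_eq (hι : Injective ι)
    (hsq2 : ∀ a, ∀ h : t a = ℓ, ∀ x : N (s' a),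
      e (s a) (hsink a) (cast (congrArg N (hrev1 a h).2) (g a x))
        = ι (cast (congrArg N (hrev1 a h).1) x) ⟨a, h⟩)
    {ψ ψ' : ∀ v, N v →ₗ[k] N v} (hψ : ∀ a x, ψ (t' a) (g a x) = g a (ψ (s' a) x))
    (hψ' : ∀ a x, ψ' (t' a) (g a x) = g a (ψ' (s' a) x))
    (h : ∀ v, v ≠ ℓ → conjAway e ψ v = conjAway e ψ' v) : ψ = ψ' := by
  funext v
  rcases eq_or_ne v ℓ with rfl | hv
  · refine LinearMap.ext fun z => hι ?_
    rw [ι_map_eq_piMap_conjAway hsink hrev1 hsq2 hψ, ι_map_eq_piMap_conjAway hsink hrev1 hsq2 hψ']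
    congr 2
    exact funext fun b => h _ (hsink b.1)
  · exact (e v hv).conj.injective (by simpa only [conjAway_of_ne _ hv] using h v hv)

variable [Fintype A]

theorem Indecomposable.reflect (hM : Indecomposable k s t M f)
    (hsurj : Surjective (sinkMap ℓ f)) (hι : Injective ι)
    (hexact : Exact ι (sinkMap ℓ f))
    (hsq1 : ∀ a, ∀ h : t a ≠ ℓ, ∀ x : N (s' a),
      e (t a) h (cast (congrArg N (hrev2 a h).2) (g a x))
        = f a (e (s a) (hsink a) (cast (congrArg N (hrev2 a h).1) x)))
    (hsq2 : ∀ a, ∀ h : t a = ℓ, ∀ x : N (s' a),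
      e (s a) (hsink a) (cast (congrArg N (hrev1 a h).2) (g a x))
        = ι (cast (congrArg N (hrev1 a h).1) x) ⟨a, h⟩) :
    Indecomposable k s' t' N g := by
  refine ⟨fun hN => hM.1 (subsingleton_of_sinkMap_surjective hsink hsurj fun v hv =>
    have := hN v; (e v hv).symm.toEquiv.subsingleton), fun ψ hψ hidem => ?_⟩
  have hidem₀ : ∀ v, v ≠ ℓ → ∀ x, conjAway e ψ v (conjAway e ψ v x) = conjAway e ψ v x :=
    fun v hv x => by simp [conjAway_of_ne ψ hv, hidem]
  set Ψ := LinearMap.piMap (fun b : {a : A // t a = ℓ} => conjAway e ψ (s b.1))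
  have hΨ : IsIdempotentElem Ψ := LinearMap.ext fun x => funext fun b => hidem₀ _ (hsink b.1) _
  have hker : LinearMap.ker (sinkMap ℓ f) ≤ LinearMap.ker (sinkMap ℓ f ∘ₗ Ψ) := fun x hx => by
    obtain ⟨z, rfl⟩ := (hexact x).1 hx
    change sinkMap ℓ f (LinearMap.piMap _ (ι z)) = 0
    rw [← ι_map_eq_piMap_conjAway hsink hrev1 hsq2 hψ]
    exact hexact.apply_apply_eq_zero _
  obtain ⟨q, hq, hqΦ⟩ := LinearMap.exists_isIdempotentElem_comp_eq_of_surjective hsurj hΨ hker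
  have hcomm := update_commute_of_sink hsink
    (conjAway_commute_of_ne hsink hrev2 hsq1 hψ) hqΦ
  have hN : ∀ ψ', (∀ a x, ψ' (t' a) (g a x) = g a (ψ' (s' a) x)) →
      (∀ v, v ≠ ℓ → conjAway e ψ' v = update (conjAway e ψ) ℓ q v) → ψ = ψ' :=
    fun ψ' hψ' h => eq_of_conjAway_eq hsink hrev1 hι hsq2 hψ hψ' fun v hv => by
      rw [h v hv, update_of_ne hv]
  rcases hM.2 _ hcomm (update_idempotent hidem₀ hq) with h0 | hid
  · refine .inl fun v => congrFun (hN 0 (fun _ _ => by simp) fun v hv => ?_) v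
    rw [h0 v, conjAway_of_ne _ hv, Pi.zero_apply, map_zero]
  · refine .inr fun v => congrFun (hN (fun _ => LinearMap.id) (fun _ _ => rfl) fun v hv => ?_) v
    rw [hid v, conjAway_of_ne _ hv, LinearEquiv.conj_id]

end Reflection

end QuiverRep

theorem bgp_reflection_functor_indecomposable_general
    (k : Type*) [Field k] {V A : Type*} [DecidableEq V] [Fintype A]
    (s t : A → V) (ℓ : V)
    (hsink : ∀ a, s a ≠ ℓ)
    (M : V → Type*) [∀ v, AddCommGroup (M v)] [∀ v, Module k (M v)]
    [∀ v, FiniteDimensional k (M v)]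
    (f : ∀ a, M (s a) →ₗ[k] M (t a))
    (s' t' : A → V)
    (hrev1 : ∀ a, ∀ _ : t a = ℓ, s' a = ℓ ∧ t' a = s a)
    (hrev2 : ∀ a, ∀ _ : t a ≠ ℓ, s' a = s a ∧ t' a = t a)
    (N : V → Type*) [∀ v, AddCommGroup (N v)] [∀ v, Module k (N v)]
    (g : ∀ a, N (s' a) →ₗ[k] N (t' a))
    (e : ∀ v, v ≠ ℓ → (N v ≃ₗ[k] M v))
    (ι : N ℓ →ₗ[k] ((a : {a : A // t a = ℓ}) → M (s a.1)))
    (hι : Function.Injective ι)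
    (hker : ∀ x : (a : {a : A // t a = ℓ}) → M (s a.1),
      x ∈ Set.range ι ↔
        (∑ a : {a : A // t a = ℓ}, cast (congrArg M a.2) (f a.1 (x a))) = 0)
    (hsq1 : ∀ a, ∀ h : t a ≠ ℓ, ∀ x : N (s' a),
      e (t a) h (cast (congrArg N (hrev2 a h).2) (g a x))
        = f a (e (s a) (hsink a) (cast (congrArg N (hrev2 a h).1) x)))
    (hsq2 : ∀ a, ∀ h : t a = ℓ, ∀ x : N (s' a),
      e (s a) (hsink a) (cast (congrArg N (hrev1 a h).2) (g a x))
        = ι (cast (congrArg N (hrev1 a h).1) x) ⟨a, h⟩) :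
    (QuiverRep.Indecomposable k s t M f → ¬ QuiverRep.IsoSimpleAt k ℓ M →
        QuiverRep.Indecomposable k s' t' N g ∧
        (∀ v, v ≠ ℓ → Module.finrank k (N v) = Module.finrank k (M v)) ∧
        (Module.finrank k (N ℓ) : ℤ)
          = (∑ a : {a : A // t a = ℓ}, (Module.finrank k (M (s a.1)) : ℤ))
            - Module.finrank k (M ℓ))
    ∧ (QuiverRep.IsoSimpleAt k ℓ M → ∀ v, Subsingleton (N v)) := by
  have hexact : Function.Exact ι (QuiverRep.sinkMap ℓ f) := fun x => by
    rw [QuiverRep.sinkMap_apply, hker]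
  refine ⟨fun hM hS => ?_, QuiverRep.subsingleton_of_isoSimpleAt hsink e hι⟩
  have hsurj := hM.sinkMap_surjective hsink hS
  refine ⟨hM.reflect hsink hrev1 hrev2 hsurj hι hexact hsq1 hsq2,
    fun v hv => (e v hv).finrank_eq, ?_⟩
  have hdim := Module.finrank_add_finrank_of_exact hι hexact hsurj
  rw [Module.finrank_pi_fintype] at hdim
  rw [← Nat.cast_sum, ← hdim]
  push_cast
  ring

/-- Let `Q` be an acyclic quiver and `ℓ` a sink of `Q` (no arrows start
at `ℓ`).  Let `L = (M, f)` be a representation of `Q` over a field `k` and let `N = (N, g)`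
be the representation of the reflected quiver `s_ℓ Q` (source/target `s'`, `t'`) obtained
from `L` by the Bernstein–Gelfand–Ponomarev reflection functor `F_ℓ⁺`: it agrees with `L`
away from `ℓ` (via the equivalences `e`), and at `ℓ` it is, via `ι`, the kernel of the
canonical map `⊕_{a : t a = ℓ} M (s a) → M ℓ`, with the reversed arrows acting by the
projections.  Then: if `L` is indecomposable and not isomorphic to `S_ℓ`, the reflected
representation `F_ℓ⁺ L` is indecomposable with dimension vector `s_ℓ (dim L)`; and
`F_ℓ⁺ S_ℓ = 0`. -/
theorem bgp_reflection_functor_indecomposable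
    (k : Type*) [Field k] {V A : Type*} [DecidableEq V] [Fintype A]
    (s t : A → V) (ℓ : V)
    (hsink : ∀ a, s a ≠ ℓ)
    (hacyclic : ∃ h : V → ℕ, ∀ a, h (s a) < h (t a))
    (M : V → Type*) [∀ v, AddCommGroup (M v)] [∀ v, Module k (M v)]
    [∀ v, FiniteDimensional k (M v)]
    (f : ∀ a, M (s a) →ₗ[k] M (t a))
    (s' t' : A → V)
    (hrev1 : ∀ a, ∀ _ : t a = ℓ, s' a = ℓ ∧ t' a = s a)
    (hrev2 : ∀ a, ∀ _ : t a ≠ ℓ, s' a = s a ∧ t' a = t a)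
    (N : V → Type*) [∀ v, AddCommGroup (N v)] [∀ v, Module k (N v)]
    [∀ v, FiniteDimensional k (N v)]
    (g : ∀ a, N (s' a) →ₗ[k] N (t' a))
    (e : ∀ v, v ≠ ℓ → (N v ≃ₗ[k] M v))
    (ι : N ℓ →ₗ[k] ((a : {a : A // t a = ℓ}) → M (s a.1)))
    (hι : Function.Injective ι)
    (hker : ∀ x : (a : {a : A // t a = ℓ}) → M (s a.1),
      x ∈ Set.range ι ↔
        (∑ a : {a : A // t a = ℓ}, cast (congrArg M a.2) (f a.1 (x a))) = 0)
    (hsq1 : ∀ a, ∀ h : t a ≠ ℓ, ∀ x : N (s' a),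
      e (t a) h (cast (congrArg N (hrev2 a h).2) (g a x))
        = f a (e (s a) (hsink a) (cast (congrArg N (hrev2 a h).1) x)))
    (hsq2 : ∀ a, ∀ h : t a = ℓ, ∀ x : N (s' a),
      e (s a) (hsink a) (cast (congrArg N (hrev1 a h).2) (g a x))
        = ι (cast (congrArg N (hrev1 a h).1) x) ⟨a, h⟩) :
    (QuiverRep.Indecomposable k s t M f → ¬ QuiverRep.IsoSimpleAt k ℓ M →
        QuiverRep.Indecomposable k s' t' N g ∧
        (∀ v, v ≠ ℓ → Module.finrank k (N v) = Module.finrank k (M v)) ∧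
        (Module.finrank k (N ℓ) : ℤ)
          = (∑ a : {a : A // t a = ℓ}, (Module.finrank k (M (s a.1)) : ℤ))
            - Module.finrank k (M ℓ))
    ∧ (QuiverRep.IsoSimpleAt k ℓ M → ∀ v, Subsingleton (N v)) :=
  bgp_reflection_functor_indecomposable_general k s t ℓ hsink M f s' t' hrev1 hrev2 N g e ι hι hker
    hsq1 hsq2
end

section
/- Let W be a finite Weyl group of simply-laced type with longest element w₀, and τ a diagram involution. If w₀ = s_{j_1}⋯s_{j_N} is a reduced expression obtained by grouping: whenever τ(i) ≠ i the letters s_i and s_{τi} appear in adjacent commuting pairs, then the corresponding product of elements bs_i (bs_i = s_i or s_i s_{τi}) is a reduced expression of w₀ in the restricted Weyl group W_τ with respect to its Coxeter generators {bs_i}. -/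
/-!
Let `σ` be the automorphism of `W` induced by `τ`, so that `W_τ` is fixed by `σ`, and put
`L w = ℓ w + #{σ-fixed left inversions of w}`. Right multiplication by `s i` changes the set of
left inversions exactly by the reflection `w s_i w⁻¹`; this is read off from the sign
representation of `W` on `W × ℤˣ`. Hence multiplying a `σ`-fixed `w` by a generator `bs i` raises
`L` by at most `2`, and by exactly `2` when the length grows by the length of the orbit word of
`i`: for `τ i = i` the new inversion is `σ`-fixed, for `τ i ≠ i` the two new inversions are
swapped by `σ`. So `L w₀ = 2 |ω|` along the reduced grouped word, while `L w₀ ≤ 2 |ω'|` for every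
`bs`-word `ω'` with product `w₀`.
-/

namespace List

theorem even_count_of_getElem_add {α : Type*} [BEq α] (l : List α) {m : ℕ}
    (hl : l.length = 2 * m) (h : ∀ k (hk : k < m), l[k + m] = l[k]) (a : α) :
    Even (l.count a) := by
  have htd : l.drop m = l.take m := by
    apply ext_getElem (by simp; omega)
    intro k h₁ h₂
    simp only [getElem_drop, getElem_take]
    simpa [Nat.add_comm] using h k (by simp at h₂; omega)
  rw [← take_append_drop m l, count_append, htd]
  exact ⟨_, rfl⟩

end List

namespace CoxeterSystem

open List

variable {B W : Type*} [Group W] {M : CoxeterMatrix B} (cs : CoxeterSystem M W)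

local prefix:100 "s" => cs.simple
local prefix:100 "π" => cs.wordProd
local prefix:100 "ℓ" => cs.length
local prefix:100 "lis" => cs.leftInvSeq

theorem prod_map_alternatingWord {G : Type*} [Monoid G] (f : B → G) (i j : B) (m : ℕ) :
    ((alternatingWord i j (2 * m)).map f).prod = (f i * f j) ^ m := by
  induction m with
  | zero => simp [alternatingWord]
  | succ m ih =>
    rw [show 2 * (m + 1) = 2 * m + 1 + 1 by ring, alternatingWord_succ', alternatingWord_succ']
    simp [ih, pow_succ', mul_assoc]

theorem even_count_leftInvSeq_alternatingWord [DecidableEq W] (i j : B) (t : W) :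
    Even ((lis (alternatingWord i j (2 * M i j))).count t) := by
  refine (lis _).even_count_of_getElem_add (m := M i j) (by simp) (fun k hk => ?_) t
  rw [getElem_leftInvSeq_alternatingWord cs i j (M i j) (k + M i j) (by omega),
    getElem_leftInvSeq_alternatingWord cs i j (M i j) k (by omega)]
  simp only [prod_alternatingWord_eq_mul_pow, show ¬ Even (2 * (k + M i j) + 1) by simp,
    show ¬ Even (2 * k + 1) by simp, if_false]
  rw [show (2 * (k + M i j) + 1) / 2 = k + M i j by omega, show (2 * k + 1) / 2 = k by omega,
    pow_add, simple_mul_simple_pow', mul_one]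

open Classical in
/-- The action of `s i` from the standard proof of the strong exchange condition. -/
noncomputable def signFlip (i : B) (x : W × ℤˣ) : W × ℤˣ :=
  (s i * x.1 * s i, (if x.1 = s i then -1 else 1) * x.2)

theorem simple_mul_mul_simple_eq_simple_iff (i : B) (t : W) : s i * t * s i = s i ↔ t = s i := by
  rw [mul_assoc, mul_eq_left, mul_eq_one_iff_eq_inv, cs.inv_simple]

theorem signFlip_involutive (i : B) : Function.Involutive (cs.signFlip i) := by
  rintro ⟨t, ε⟩
  by_cases h : t = s i <;>
    simp [signFlip, h, cs.simple_mul_mul_simple_eq_simple_iff, ← mul_assoc]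

noncomputable def signPerm (i : B) : Equiv.Perm (W × ℤˣ) := (cs.signFlip_involutive i).toPerm

theorem signPerm_apply (i : B) (x : W × ℤˣ) : cs.signPerm i x = cs.signFlip i x := rfl

theorem list_prod_map_signPerm_apply [DecidableEq W] (γ : List B) (t : W) (ε : ℤˣ) :
    (γ.map cs.signPerm).prod (t, ε) =
      (π γ * t * (π γ)⁻¹, (-1) ^ (lis γ).count (π γ * t * (π γ)⁻¹) * ε) := by
  induction γ with
  | nil => simp
  | cons i γ ih =>
    rw [map_cons, prod_cons, Equiv.Perm.mul_apply, ih, signPerm_apply, signFlip]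
    set u := π γ * t * (π γ)⁻¹
    have hu : π (i :: γ) * t * (π (i :: γ))⁻¹ = MulAut.conj (s i) u := by
      simp [wordProd_cons, u, mul_assoc]
    rw [hu, leftInvSeq, count_cons, count_map_of_injective _ _ (MulAut.conj (s i)).injective]
    simp only [MulAut.conj_apply, cs.inv_simple, beq_iff_eq, eq_comm (a := s i),
      cs.simple_mul_mul_simple_eq_simple_iff]
    by_cases h : u = s i <;> simp [h, pow_succ]

theorem isLiftable_signPerm : M.IsLiftable cs.signPerm := by
  classical
  intro i j
  rw [← prod_map_alternatingWord]
  ext ⟨t, ε⟩ <;> rw [list_prod_map_signPerm_apply, prod_alternatingWord_eq_mul_pow]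
  · simp
  · simp [(cs.even_count_leftInvSeq_alternatingWord i j _).neg_one_pow]

noncomputable def signRep : W →* Equiv.Perm (W × ℤˣ) :=
  cs.lift ⟨_, cs.isLiftable_signPerm⟩

theorem signRep_wordProd_apply [DecidableEq W] (γ : List B) (t : W) (ε : ℤˣ) :
    cs.signRep (π γ) (t, ε) =
      (π γ * t * (π γ)⁻¹, (-1) ^ (lis γ).count (π γ * t * (π γ)⁻¹) * ε) := by
  rw [← list_prod_map_signPerm_apply, wordProd, map_list_prod, map_map]
  congr 3
  ext1 i
  exact cs.lift_apply_simple cs.isLiftable_signPerm i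

noncomputable def inversionSign (w t : W) : ℤˣ := (cs.signRep w (w⁻¹ * t * w, 1)).2

theorem inversionSign_wordProd [DecidableEq W] (γ : List B) (t : W) :
    cs.inversionSign (π γ) t = (-1) ^ (lis γ).count t := by
  simp [inversionSign, signRep_wordProd_apply, mul_assoc]

theorem signRep_apply (w t : W) (ε : ℤˣ) :
    cs.signRep w (t, ε) = (w * t * w⁻¹, cs.inversionSign w (w * t * w⁻¹) * ε) := by
  classical
  obtain ⟨γ, rfl⟩ := cs.wordProd_surjective w
  rw [signRep_wordProd_apply, inversionSign_wordProd]

theorem inversionSign_mul (x y t : W) :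
    cs.inversionSign (x * y) t = cs.inversionSign x t * cs.inversionSign y (x⁻¹ * t * x) := by
  have hy : y * ((x * y)⁻¹ * t * (x * y)) * y⁻¹ = x⁻¹ * t * x := by group
  have hx : x * (x⁻¹ * t * x) * x⁻¹ = t := by group
  rw [inversionSign, map_mul, Equiv.Perm.mul_apply, signRep_apply cs y, hy, mul_one,
    signRep_apply cs x, hx]

theorem inversionSign_one (t : W) : cs.inversionSign 1 t = 1 := by
  simp [inversionSign]

theorem inversionSign_simple_self (i : B) : cs.inversionSign (s i) (s i) = -1 := by
  classical
  simpa using cs.inversionSign_wordProd [i] (s i)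

theorem inversionSign_simple_of_ne {i : B} {t : W} (h : t ≠ s i) :
    cs.inversionSign (s i) t = 1 := by
  classical
  simpa [Ne.symm h] using cs.inversionSign_wordProd [i] t

theorem inversionSign_self {t : W} (ht : cs.IsReflection t) : cs.inversionSign t t = -1 := by
  obtain ⟨x, k, rfl⟩ := ht
  have hk : x⁻¹ * (x * s k * x⁻¹) * x = s k := by group
  have hcancel : cs.inversionSign x (x * s k * x⁻¹) * cs.inversionSign x⁻¹ (s k) = 1 := by
    have := cs.inversionSign_mul x x⁻¹ (x * s k * x⁻¹)
    rwa [mul_inv_cancel, inversionSign_one, hk, eq_comm] at this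
  have hxk : (x * s k)⁻¹ * (x * s k * x⁻¹) * (x * s k) = s k := by
    simp [mul_assoc]
  rw [inversionSign_mul, inversionSign_mul, hxk, hk, inversionSign_simple_self,
    mul_neg_one, neg_mul, hcancel]

theorem inversionSign_mul_of_isReflection {t : W} (ht : cs.IsReflection t) (w : W) :
    cs.inversionSign (t * w) t = -cs.inversionSign w t := by
  rw [inversionSign_mul, inversionSign_self cs ht, ht.inv, mul_assoc, ht.mul_self, mul_one,
    neg_one_mul]

theorem mem_leftInvSeq_of_inversionSign_eq_neg_one {γ : List B} {t : W}
    (h : cs.inversionSign (π γ) t = -1) : t ∈ lis γ := by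
  classical
  rw [inversionSign_wordProd] at h
  rw [← count_pos_iff, Nat.pos_iff_ne_zero]
  intro h0
  rw [h0, pow_zero] at h
  exact absurd h (by decide)

theorem isLeftInversion_iff_inversionSign_eq_neg_one {w t : W} (ht : cs.IsReflection t) :
    cs.IsLeftInversion w t ↔ cs.inversionSign w t = -1 := by
  have of_sign : ∀ {w}, cs.inversionSign w t = -1 → cs.IsLeftInversion w t := fun {w} h => by
    obtain ⟨γ, hγ, rfl⟩ := cs.exists_isReduced w
    exact cs.isLeftInversion_of_mem_leftInvSeq hγ (cs.mem_leftInvSeq_of_inversionSign_eq_neg_one h)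
  refine ⟨fun hw => ?_, of_sign⟩
  rcases Int.units_eq_one_or (cs.inversionSign w t) with h | h
  · have := of_sign (w := t * w) (by rw [inversionSign_mul_of_isReflection cs ht, h])
    exact absurd hw (ht.isLeftInversion_mul_right_iff.mp this)
  · exact h

theorem isLeftInversion_mul_simple_iff {w t : W} {i : B} (h : t ≠ w * s i * w⁻¹) :
    cs.IsLeftInversion (w * s i) t ↔ cs.IsLeftInversion w t := by
  by_cases ht : cs.IsReflection t
  · have hi : w⁻¹ * t * w ≠ s i := fun h' => h (by rw [← h']; group)
    rw [isLeftInversion_iff_inversionSign_eq_neg_one cs ht,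
      isLeftInversion_iff_inversionSign_eq_neg_one cs ht, inversionSign_mul,
      inversionSign_simple_of_ne cs hi, mul_one]
  · simp [IsLeftInversion, ht]

theorem finite_setOf_isLeftInversion (w : W) : {t | cs.IsLeftInversion w t}.Finite := by
  obtain ⟨γ, -, rfl⟩ := cs.exists_isReduced w
  refine (lis γ).finite_toSet.subset fun t ht => ?_
  exact cs.mem_leftInvSeq_of_inversionSign_eq_neg_one
    ((isLeftInversion_iff_inversionSign_eq_neg_one cs ht.1).mp ht)

theorem isLeftInversion_mul_simple_conj_iff (w : W) (i : B) :
    cs.IsLeftInversion (w * s i) (w * s i * w⁻¹) ↔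
      ¬cs.IsLeftInversion w (w * s i * w⁻¹) := by
  have h := ((cs.isReflection_simple i).conj w).isLeftInversion_mul_right_iff (w := w)
  rwa [show w * s i * w⁻¹ * w = w * s i by group] at h

section FixedInversions

variable (σ : W →* W)

def fixedLeftInversions (w : W) : Set W := {t | cs.IsLeftInversion w t ∧ σ t = t}

/-- For `σ`-stable `w` and involutive `σ` this is twice the number of `σ`-orbits of left
inversions of `w`. -/
noncomputable def twistedLength (w : W) : ℕ := ℓ w + (cs.fixedLeftInversions σ w).ncard

theorem finite_fixedLeftInversions (w : W) : (cs.fixedLeftInversions σ w).Finite :=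
  (cs.finite_setOf_isLeftInversion w).subset fun _ ht => ht.1

@[simp] theorem twistedLength_one : cs.twistedLength σ 1 = 0 := by
  simp [twistedLength, fixedLeftInversions, IsLeftInversion]

theorem fixedLeftInversions_mul_simple_subset (w : W) (i : B) :
    cs.fixedLeftInversions σ (w * s i) ⊆
      insert (w * s i * w⁻¹) (cs.fixedLeftInversions σ w) := by
  rintro t ⟨ht, hσt⟩
  by_cases h : t = w * s i * w⁻¹
  · exact .inl h
  · exact .inr ⟨(cs.isLeftInversion_mul_simple_iff h).mp ht, hσt⟩

theorem twistedLength_mul_simple_le (w : W) (i : B) :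
    cs.twistedLength σ (w * s i) ≤ cs.twistedLength σ w + 2 := by
  have hfix := (Set.ncard_le_ncard (cs.fixedLeftInversions_mul_simple_subset σ w i)
    ((cs.finite_fixedLeftInversions σ w).insert _)).trans (Set.ncard_insert_le _ _)
  have hlen := cs.length_mul_le w (s i)
  rw [length_simple] at hlen
  unfold twistedLength
  omega

theorem twistedLength_mul_simple {w : W} {i : B} (hσw : σ w = w) (hσi : σ (s i) = s i)
    (hinc : ℓ w < ℓ (w * s i)) : cs.twistedLength σ (w * s i) = cs.twistedLength σ w + 2 := by
  set u := w * s i * w⁻¹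
  have hu : ¬cs.IsLeftInversion w u := fun h => by
    have := h.2
    rw [show u * w = w * s i by simp [u]] at this
    omega
  have hσu : σ u = u := by simp [u, hσw, hσi]
  have heq : cs.fixedLeftInversions σ (w * s i) = insert u (cs.fixedLeftInversions σ w) := by
    refine (cs.fixedLeftInversions_mul_simple_subset σ w i).antisymm ?_
    rintro t (rfl | ⟨ht, hσt⟩)
    · exact ⟨(cs.isLeftInversion_mul_simple_conj_iff w i).mpr hu, hσu⟩
    · exact ⟨(cs.isLeftInversion_mul_simple_iff fun (h : t = u) => hu (h ▸ ht)).mpr ht, hσt⟩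
  have hlen : ℓ (w * s i) = ℓ w + 1 := by
    rcases cs.length_mul_simple w i with h | h <;> omega
  rw [twistedLength, twistedLength, heq,
    Set.ncard_insert_of_notMem (fun h => hu h.1) (cs.finite_fixedLeftInversions σ w), hlen]
  ring

/-- The inversions toggled by `s i` and then `s j` are swapped by `σ`, so no fixed one changes. -/
theorem fixedLeftInversions_mul_pair {w : W} {i j : B} (hij : s i * s j = s j * s i)
    (hσw : σ w = w) (hσi : σ (s i) = s j) (hσj : σ (s j) = s i) :
    cs.fixedLeftInversions σ (w * (s i * s j)) = cs.fixedLeftInversions σ w := by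
  by_cases hs : s i = s j
  · rw [hs, simple_mul_simple_self, mul_one]
  have hconj : w * s i * s j * (w * s i)⁻¹ = w * s j * w⁻¹ := by
    rw [mul_assoc w, hij]; simp [mul_assoc]
  ext t
  refine and_congr_left fun hσt => ?_
  have not_conj : ∀ {k l}, σ (s k) = s l → s k ≠ s l → t ≠ w * s k * w⁻¹ := by
    rintro k l hk hkl rfl
    simp only [map_mul, map_inv, hσw, hk, mul_left_inj, mul_right_inj] at hσt
    exact hkl hσt.symm
  rw [← mul_assoc, cs.isLeftInversion_mul_simple_iff (hconj ▸ not_conj hσj (Ne.symm hs)),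
    cs.isLeftInversion_mul_simple_iff (not_conj hσi hs)]

theorem twistedLength_mul_pair_add_length {w : W} {i j : B} (hij : s i * s j = s j * s i)
    (hσw : σ w = w) (hσi : σ (s i) = s j) (hσj : σ (s j) = s i) :
    cs.twistedLength σ (w * (s i * s j)) + ℓ w =
      cs.twistedLength σ w + ℓ (w * (s i * s j)) := by
  rw [twistedLength, twistedLength, cs.fixedLeftInversions_mul_pair σ hij hσw hσi hσj]
  ring

end FixedInversions

theorem simple_mul_simple_comm_of_eq_two {i j : B} (h : M i j = 2) : s i * s j = s j * s i := by
  have hpow := cs.simple_mul_simple_pow i j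
  rwa [h, pow_two, mul_eq_one_iff_eq_inv, mul_inv_rev, inv_simple, inv_simple] at hpow

section Folding

variable {τ : B → B}

noncomputable def diagramAut (hτM : ∀ i j, M (τ i) (τ j) = M i j) : W →* W :=
  cs.lift ⟨fun i => s (τ i), fun i j => by rw [← hτM]; exact cs.simple_mul_simple_pow _ _⟩

theorem diagramAut_simple (hτM : ∀ i j, M (τ i) (τ j) = M i j) (i : B) :
    cs.diagramAut hτM (s i) = s (τ i) :=
  cs.lift_apply_simple _ i

variable [DecidableEq B] (τ)

def orbitWord (i : B) : List B := if τ i = i then [i] else [i, τ i]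

def restrictedSimple (i : B) : W := if τ i = i then s i else s i * s (τ i)

theorem wordProd_orbitWord (i : B) : π (orbitWord τ i) = cs.restrictedSimple τ i := by
  unfold orbitWord restrictedSimple
  split_ifs <;> simp [wordProd_cons]

theorem wordProd_flatMap_orbitWord (ω : List B) :
    π (ω.flatMap (orbitWord τ)) = (ω.map (cs.restrictedSimple τ)).prod := by
  induction ω with
  | nil => simp
  | cons i ω ih => rw [flatMap_cons, wordProd_append, ih, wordProd_orbitWord, map_cons, prod_cons]

variable {τ} {σ : W →* W}

theorem map_restrictedSimple (hσ : ∀ i, σ (s i) = s (τ i)) (hτ : Function.Involutive τ)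
    (hcomm : ∀ i, s i * s (τ i) = s (τ i) * s i) (i : B) :
    σ (cs.restrictedSimple τ i) = cs.restrictedSimple τ i := by
  unfold restrictedSimple
  split_ifs with h
  · rw [hσ, h]
  · rw [map_mul, hσ, hσ, hτ, hcomm]

theorem map_prod_restrictedSimple (hσ : ∀ i, σ (s i) = s (τ i)) (hτ : Function.Involutive τ)
    (hcomm : ∀ i, s i * s (τ i) = s (τ i) * s i) (ω : List B) :
    σ (ω.map (cs.restrictedSimple τ)).prod = (ω.map (cs.restrictedSimple τ)).prod := by
  rw [map_list_prod, map_map]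
  exact congrArg _ (map_congr_left fun i _ => cs.map_restrictedSimple hσ hτ hcomm i)

theorem twistedLength_mul_restrictedSimple_le (hσ : ∀ i, σ (s i) = s (τ i))
    (hτ : Function.Involutive τ) (hcomm : ∀ i, s i * s (τ i) = s (τ i) * s i) {w : W}
    (hσw : σ w = w) (i : B) :
    cs.twistedLength σ (w * cs.restrictedSimple τ i) ≤ cs.twistedLength σ w + 2 := by
  unfold restrictedSimple
  split_ifs with h
  · exact cs.twistedLength_mul_simple_le σ w i
  · have hpair := cs.twistedLength_mul_pair_add_length σ (hcomm i) hσw (hσ i) (by rw [hσ, hτ])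
    have hlen := cs.length_mul_le w (s i * s (τ i))
    have hlen' := cs.length_mul_le (s i) (s (τ i))
    rw [length_simple, length_simple] at hlen'
    omega

theorem twistedLength_mul_restrictedSimple (hσ : ∀ i, σ (s i) = s (τ i))
    (hτ : Function.Involutive τ) (hcomm : ∀ i, s i * s (τ i) = s (τ i) * s i) {w : W}
    (hσw : σ w = w) {i : B}
    (hinc : ℓ (w * cs.restrictedSimple τ i) = ℓ w + (orbitWord τ i).length) :
    cs.twistedLength σ (w * cs.restrictedSimple τ i) = cs.twistedLength σ w + 2 := by
  unfold restrictedSimple orbitWord at *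
  split_ifs at * with h
  · rw [length_singleton] at hinc
    exact cs.twistedLength_mul_simple σ hσw (by rw [hσ, h]) (by omega)
  · have hpair := cs.twistedLength_mul_pair_add_length σ (hcomm i) hσw (hσ i) (by rw [hσ, hτ])
    rw [length_cons, length_singleton] at hinc
    omega

theorem twistedLength_prod_restrictedSimple_le (hσ : ∀ i, σ (s i) = s (τ i))
    (hτ : Function.Involutive τ) (hcomm : ∀ i, s i * s (τ i) = s (τ i) * s i) (ω : List B) :
    cs.twistedLength σ (ω.map (cs.restrictedSimple τ)).prod ≤ 2 * ω.length := by
  induction ω using List.reverseRecOn with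
  | nil => simp
  | append_singleton ω i ih =>
    have := cs.twistedLength_mul_restrictedSimple_le hσ hτ hcomm
      (cs.map_prod_restrictedSimple hσ hτ hcomm ω) i
    simp only [map_append, map_singleton, prod_append, prod_singleton, length_append,
      length_singleton]
    omega

theorem twistedLength_prod_restrictedSimple_of_isReduced (hσ : ∀ i, σ (s i) = s (τ i))
    (hτ : Function.Involutive τ) (hcomm : ∀ i, s i * s (τ i) = s (τ i) * s i) {ω : List B}
    (hω : cs.IsReduced (ω.flatMap (orbitWord τ))) :
    cs.twistedLength σ (ω.map (cs.restrictedSimple τ)).prod = 2 * ω.length := by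
  induction ω using List.reverseRecOn with
  | nil => simp
  | append_singleton ω i ih =>
    rw [flatMap_append, flatMap_singleton] at hω
    have hprefix : cs.IsReduced (ω.flatMap (orbitWord τ)) := by
      simpa using hω.take (ω.flatMap (orbitWord τ)).length
    have hinc : ℓ ((ω.map (cs.restrictedSimple τ)).prod * cs.restrictedSimple τ i) =
        ℓ (ω.map (cs.restrictedSimple τ)).prod + (orbitWord τ i).length := by
      rw [← wordProd_flatMap_orbitWord, ← wordProd_orbitWord, ← wordProd_append, hω.eq,
        hprefix.eq, length_append]
    simp only [map_append, map_singleton, prod_append, prod_singleton, length_append,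
      length_singleton]
    rw [cs.twistedLength_mul_restrictedSimple hσ hτ hcomm
      (cs.map_prod_restrictedSimple hσ hτ hcomm ω) hinc, ih hprefix]
    ring

end Folding

end CoxeterSystem

theorem grouped_reduced_word_is_reduced_in_restricted_Weyl_group_general
    {B W : Type*} [Group W] [DecidableEq B]
    (M : CoxeterMatrix B) (cs : CoxeterSystem M W)
    (τ : B → B) (hτ2 : ∀ i, τ (τ i) = i)
    (hτM : ∀ i j, M (τ i) (τ j) = M i j)
    (hcomm : ∀ i, τ i ≠ i → M i (τ i) = 2)
    (w₀ : W)
    (ω : List B)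
    (hred : cs.IsReduced (ω.flatMap (fun i => if τ i = i then [i] else [i, τ i])))
    (hprod : cs.wordProd (ω.flatMap (fun i => if τ i = i then [i] else [i, τ i])) = w₀) :
    ((ω.map (fun i => if τ i = i then cs.simple i else cs.simple i * cs.simple (τ i))).prod
        = w₀)
    ∧ ∀ ω' : List B,
        ((ω'.map (fun i =>
            if τ i = i then cs.simple i else cs.simple i * cs.simple (τ i))).prod = w₀) →
        ω.length ≤ ω'.length := by
  change cs.IsReduced (ω.flatMap (CoxeterSystem.orbitWord τ)) at hred
  change cs.wordProd (ω.flatMap (CoxeterSystem.orbitWord τ)) = w₀ at hprod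
  show (ω.map (cs.restrictedSimple τ)).prod = w₀ ∧
    ∀ ω' : List B, (ω'.map (cs.restrictedSimple τ)).prod = w₀ → ω.length ≤ ω'.length
  have hcomm' : ∀ i, cs.simple i * cs.simple (τ i) = cs.simple (τ i) * cs.simple i := by
    intro i
    by_cases h : τ i = i
    · rw [h]
    · exact cs.simple_mul_simple_comm_of_eq_two (hcomm i h)
  have hσ := cs.diagramAut_simple hτM
  rw [CoxeterSystem.wordProd_flatMap_orbitWord] at hprod
  refine ⟨hprod, fun ω' hω' => ?_⟩
  have hlower := cs.twistedLength_prod_restrictedSimple_of_isReduced hσ hτ2 hcomm' hred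
  have hupper := cs.twistedLength_prod_restrictedSimple_le hσ hτ2 hcomm' ω'
  rw [hprod] at hlower
  rw [hω'] at hupper
  omega

/-- Let `W` be a finite Weyl group of simply-laced type with longest
element `w₀`, presented by a Coxeter system `cs` over a Coxeter matrix `M`, and let `τ` be a
diagram involution (`M (τ i) (τ j) = M i j`, with `s i` and `s (τ i)` commuting whenever
`τ i ≠ i`).  Suppose `w₀ = s_{j₁} ⋯ s_{j_N}` is a reduced expression obtained by grouping:
the word `j₁ ⋯ j_N` is the expansion of a word `ω` in which every letter `i` with `τ i ≠ i`
is replaced by the adjacent commuting pair `i, τ i` (and is kept as `i` if `τ i = i`).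
Then the corresponding word `ω` in the generators `bs i` (`bs i = s i` or `s i * s (τ i)`)
is a reduced expression of `w₀` in the restricted Weyl group `W_τ` with respect to its
Coxeter generators `{bs i}`: its product is `w₀` and no shorter `bs`-word has product `w₀`. -/
theorem grouped_reduced_word_is_reduced_in_restricted_Weyl_group
    {B W : Type*} [Group W] [Finite W] [DecidableEq B]
    (M : CoxeterMatrix B) (cs : CoxeterSystem M W)
    (hSL : ∀ i j : B, i ≠ j → M i j = 2 ∨ M i j = 3)  -- simply-laced
    (τ : B → B) (hτ2 : ∀ i, τ (τ i) = i)
    (hτM : ∀ i j, M (τ i) (τ j) = M i j)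
    (hcomm : ∀ i, τ i ≠ i → M i (τ i) = 2)
    (w₀ : W) (hlong : ∀ w : W, cs.length w ≤ cs.length w₀)
    (ω : List B)
    (hred : cs.IsReduced (ω.flatMap (fun i => if τ i = i then [i] else [i, τ i])))
    (hprod : cs.wordProd (ω.flatMap (fun i => if τ i = i then [i] else [i, τ i])) = w₀) :
    ((ω.map (fun i => if τ i = i then cs.simple i else cs.simple i * cs.simple (τ i))).prod
        = w₀)
    ∧ ∀ ω' : List B,
        ((ω'.map (fun i =>
            if τ i = i then cs.simple i else cs.simple i * cs.simple (τ i))).prod = w₀) →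
        ω.length ≤ ω'.length :=
  grouped_reduced_word_is_reduced_in_restricted_Weyl_group_general M cs τ hτ2 hτM hcomm w₀ ω hred
    hprod
end

section
/- Let U^ı_ς be the ı-quantum group with parameters ς = (ς_i) inside the quantum group U, generated by B_i = F_i + ς_i E_{τi} K_i^{-1} and k_j = K_j K_{τj}^{-1}. Then the map sending B_i ↦ a_i B_i and k_i ↦ k_i, where a_i = √(ς_{◇,i}/ς_i) for a second parameter ς_◇, extends (over the field F = Q(v)(a_i : i ∈ I)) to an algebra isomorphism from F ⊗ U^ı_{ς_◇} to F ⊗ U^ı_ς. -/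
namespace IQG

/-- Generators of the quantum group: `E i`, `F i`, `K i`, `K i⁻¹`. -/
inductive QGen (I : Type) : Type
  | E : I → QGen I
  | F : I → QGen I
  | K : I → QGen I
  | Kinv : I → QGen I

variable (FF : Type) [Field FF] (I : Type) [DecidableEq I] (v : FF) (c : I → I → ℤ)

open FreeAlgebra

/-- The defining relations of the simply-laced quantum group `U_v` with generators
`E i, F i, K i, K i⁻¹` (including the quantum Serre relations). -/
inductive QGRel : FreeAlgebra FF (QGen I) → FreeAlgebra FF (QGen I) → Prop
  | KKinv (i : I) : QGRel (ι FF (QGen.K i) * ι FF (QGen.Kinv i)) 1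
  | KinvK (i : I) : QGRel (ι FF (QGen.Kinv i) * ι FF (QGen.K i)) 1
  | KK (i j : I) : QGRel (ι FF (QGen.K i) * ι FF (QGen.K j))
      (ι FF (QGen.K j) * ι FF (QGen.K i))
  | KE (i j : I) : QGRel (ι FF (QGen.K i) * ι FF (QGen.E j))
      ((v ^ (c i j)) • (ι FF (QGen.E j) * ι FF (QGen.K i)))
  | KF (i j : I) : QGRel (ι FF (QGen.K i) * ι FF (QGen.F j))
      ((v ^ (-(c i j))) • (ι FF (QGen.F j) * ι FF (QGen.K i)))
  | EF (i j : I) : QGRel (ι FF (QGen.E i) * ι FF (QGen.F j) -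
        ι FF (QGen.F j) * ι FF (QGen.E i))
      (if i = j then (v - v⁻¹)⁻¹ • (ι FF (QGen.K i) - ι FF (QGen.Kinv i)) else 0)
  | EE0 (i j : I) : c i j = 0 → QGRel (ι FF (QGen.E i) * ι FF (QGen.E j))
      (ι FF (QGen.E j) * ι FF (QGen.E i))
  | FF0 (i j : I) : c i j = 0 → QGRel (ι FF (QGen.F i) * ι FF (QGen.F j))
      (ι FF (QGen.F j) * ι FF (QGen.F i))
  | EE1 (i j : I) : c i j = -1 → QGRel
      (ι FF (QGen.E i) * ι FF (QGen.E i) * ι FF (QGen.E j)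
        + ι FF (QGen.E j) * ι FF (QGen.E i) * ι FF (QGen.E i))
      ((v + v⁻¹) • (ι FF (QGen.E i) * ι FF (QGen.E j) * ι FF (QGen.E i)))
  | FF1 (i j : I) : c i j = -1 → QGRel
      (ι FF (QGen.F i) * ι FF (QGen.F i) * ι FF (QGen.F j)
        + ι FF (QGen.F j) * ι FF (QGen.F i) * ι FF (QGen.F i))
      ((v + v⁻¹) • (ι FF (QGen.F i) * ι FF (QGen.F j) * ι FF (QGen.F i)))

/-- The quantum group `U_v` of the simply-laced Cartan matrix `c`, presented by generators
and relations. -/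
def QG : Type := RingQuot (QGRel FF I v c)

instance : Ring (QG FF I v c) := by unfold QG; infer_instance
instance : Algebra FF (QG FF I v c) := by unfold QG; infer_instance

/-- The generator `E i` of the quantum group. -/
def uE (i : I) : QG FF I v c := RingQuot.mkAlgHom FF (QGRel FF I v c) (ι FF (QGen.E i))
/-- The generator `F i` of the quantum group. -/
def uF (i : I) : QG FF I v c := RingQuot.mkAlgHom FF (QGRel FF I v c) (ι FF (QGen.F i))
/-- The generator `K i` of the quantum group. -/
def uK (i : I) : QG FF I v c := RingQuot.mkAlgHom FF (QGRel FF I v c) (ι FF (QGen.K i))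
/-- The generator `K i⁻¹` of the quantum group. -/
def uKinv (i : I) : QG FF I v c := RingQuot.mkAlgHom FF (QGRel FF I v c) (ι FF (QGen.Kinv i))

variable (τ : I → I)

/-- The generator `B i = F i + ς_i E (τ i) K i⁻¹` of the ı-quantum group with parameter `p`. -/
def uB (p : I → FF) (i : I) : QG FF I v c :=
  uF FF I v c i + p i • (uE FF I v c (τ i) * uKinv FF I v c i)

/-- The Cartan element `k j = K j * K (τ j)⁻¹` of the ı-quantum group. -/
def uk (j : I) : QG FF I v c := uK FF I v c j * uKinv FF I v c (τ j)

/-- The inverse Cartan element `k j⁻¹ = K (τ j) * K j⁻¹`. -/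
def ukinv (j : I) : QG FF I v c := uK FF I v c (τ j) * uKinv FF I v c j

/-- The ı-quantum group `U^ı_p` with parameter `p`, as a subalgebra of the quantum group. -/
def Ui (p : I → FF) : Subalgebra FF (QG FF I v c) :=
  Algebra.adjoin FF
    (Set.range (uB FF I v c τ p) ∪ Set.range (uk FF I v c τ) ∪ Set.range (ukinv FF I v c τ))

/-!
Rescaling the generators, `E i ↦ (b i)⁻¹ • E i`, `F i ↦ b i • F i` with `K i^{±1}` fixed,
respects every defining relation of `U` (each relation is homogeneous in the generators), so it
is an algebra automorphism of `U`, inverse to the rescaling by `b⁻¹`. For `b = a` it fixes every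
`k j`, and it sends `B i = F i + ς◇ i • E (τ i) K i⁻¹` to
`a i • F i + ς◇ i (a (τ i))⁻¹ • E (τ i) K i⁻¹`, which is `a i` times the generator `B i` of
`U^ı_ς` because `a i * a (τ i) * ς i = ς◇ i`. Hence it maps `U^ı_{ς◇}` onto `U^ı_ς`.
-/

theorem _root_.Algebra.adjoin_range_smul_union {R A ι : Type*} [Field R] [Semiring A]
    [Algebra R A] {b : ι → R} (hb : ∀ i, b i ≠ 0) (f : ι → A) (s : Set A) :
    Algebra.adjoin R (Set.range (fun i => b i • f i) ∪ s)
      = Algebra.adjoin R (Set.range f ∪ s) := by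
  refine le_antisymm (Algebra.adjoin_le ?_) (Algebra.adjoin_le ?_) <;>
    rintro _ (⟨i, rfl⟩ | hx)
  · exact Subalgebra.smul_mem _ (Algebra.subset_adjoin (.inl ⟨i, rfl⟩)) _
  · exact Algebra.subset_adjoin (.inr hx)
  · rw [← inv_smul_smul₀ (hb i) (f i)]
    exact Subalgebra.smul_mem _ (Algebra.subset_adjoin (.inl ⟨i, rfl⟩)) _
  · exact Algebra.subset_adjoin (.inr hx)

section Rescaling

def rescaleFree (b : I → FF) : FreeAlgebra FF (QGen I) →ₐ[FF] FreeAlgebra FF (QGen I) :=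
  lift FF fun
    | .E i => (b i)⁻¹ • ι FF (.E i)
    | .F i => b i • ι FF (.F i)
    | .K i => ι FF (.K i)
    | .Kinv i => ι FF (.Kinv i)

theorem QGRel.exists_rescaleFree_eq_smul (b : I → FF) (hb : ∀ i, b i ≠ 0)
    {x y : FreeAlgebra FF (QGen I)} (h : QGRel FF I v c x y) :
    ∃ t : FF, rescaleFree FF I b x = t • x ∧ rescaleFree FF I b y = t • y := by
  cases h with
  | KKinv i | KinvK i | KK i j => exact ⟨1, by simp [rescaleFree]⟩
  | KE i j => exact ⟨(b j)⁻¹, by simp [rescaleFree], by simp [rescaleFree]; module⟩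
  | KF i j => exact ⟨b j, by simp [rescaleFree], by simp [rescaleFree]; module⟩
  | EF i j =>
    refine ⟨(b i)⁻¹ * b j, ?_⟩
    split_ifs with hij
    · subst hij; simp [rescaleFree, hb]
    · refine ⟨?_, by simp⟩; simp [rescaleFree]; module
  | EE0 i j _ => refine ⟨(b i)⁻¹ * (b j)⁻¹, ?_, ?_⟩ <;> simp [rescaleFree] <;> module
  | FF0 i j _ => refine ⟨b i * b j, ?_, ?_⟩ <;> simp [rescaleFree] <;> module
  | EE1 i j _ =>
    refine ⟨(b i)⁻¹ * (b i)⁻¹ * (b j)⁻¹, ?_, ?_⟩ <;> simp [rescaleFree] <;> module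
  | FF1 i j _ => refine ⟨b i * b i * b j, ?_, ?_⟩ <;> simp [rescaleFree] <;> module

-- `RingQuot.mkAlgHom` with its target read through the instances of `QG`: since `QG` is a plain
-- `def`, lemmas stated with the `RingQuot` instances do not apply to elements of `QG`.
def QG.mkAlgHom : FreeAlgebra FF (QGen I) →ₐ[FF] QG FF I v c :=
  RingQuot.mkAlgHom FF (QGRel FF I v c)

theorem QG.algHom_ext {A : Type} [Semiring A] [Algebra FF A] {f g : QG FF I v c →ₐ[FF] A}
    (h : f.comp (QG.mkAlgHom FF I v c) = g.comp (QG.mkAlgHom FF I v c)) : f = g :=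
  RingQuot.ringQuot_ext' FF f g h

noncomputable def rescaleHom (b : I → FF) (hb : ∀ i, b i ≠ 0) : QG FF I v c →ₐ[FF] QG FF I v c :=
  RingQuot.liftAlgHom FF ⟨(QG.mkAlgHom FF I v c).comp (rescaleFree FF I b),
    fun x y h => by
      obtain ⟨t, hx, hy⟩ := QGRel.exists_rescaleFree_eq_smul FF I v c b hb h
      simp only [AlgHom.comp_apply, hx, hy, map_smul]
      exact congrArg (t • ·) (RingQuot.mkAlgHom_rel FF h)⟩

theorem rescaleHom_comp_mkAlgHom (b : I → FF) (hb : ∀ i, b i ≠ 0) :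
    (rescaleHom FF I v c b hb).comp (QG.mkAlgHom FF I v c)
      = (QG.mkAlgHom FF I v c).comp (rescaleFree FF I b) :=
  AlgHom.ext <| RingQuot.liftAlgHom_mkAlgHom_apply FF _ _

theorem rescaleHom_comp_rescaleHom_inv (b : I → FF) (hb : ∀ i, b i ≠ 0) :
    (rescaleHom FF I v c b hb).comp
      (rescaleHom FF I v c (fun i => (b i)⁻¹) fun i => inv_ne_zero (hb i)) = AlgHom.id FF _ :=
  QG.algHom_ext FF I v c <| by
    have hfree :
        (rescaleFree FF I b).comp (rescaleFree FF I fun i => (b i)⁻¹) = AlgHom.id FF _ := by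
      ext (_ | _ | _ | _) <;> simp [rescaleFree, smul_smul, hb]
    rw [AlgHom.comp_assoc, rescaleHom_comp_mkAlgHom, ← AlgHom.comp_assoc,
      rescaleHom_comp_mkAlgHom, AlgHom.comp_assoc, hfree,
      AlgHom.comp_id, AlgHom.id_comp]

noncomputable def rescale (b : I → FF) (hb : ∀ i, b i ≠ 0) : QG FF I v c ≃ₐ[FF] QG FF I v c :=
  .ofAlgHom (rescaleHom FF I v c b hb) (rescaleHom FF I v c _ fun i => inv_ne_zero (hb i))
    (rescaleHom_comp_rescaleHom_inv FF I v c b hb)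
    (by simpa only [inv_inv] using
      rescaleHom_comp_rescaleHom_inv FF I v c _ fun i => inv_ne_zero (hb i))

variable (b : I → FF) (hb : ∀ i, b i ≠ 0) (i : I)

theorem rescale_mkAlgHom (x : FreeAlgebra FF (QGen I)) :
    rescale FF I v c b hb (QG.mkAlgHom FF I v c x) = QG.mkAlgHom FF I v c (rescaleFree FF I b x) :=
  AlgHom.congr_fun (rescaleHom_comp_mkAlgHom FF I v c b hb) x

@[simp] theorem rescale_uE : rescale FF I v c b hb (uE FF I v c i) = (b i)⁻¹ • uE FF I v c i :=
  (rescale_mkAlgHom FF I v c b hb _).trans <| by simp [rescaleFree]; rfl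

@[simp] theorem rescale_uF : rescale FF I v c b hb (uF FF I v c i) = b i • uF FF I v c i :=
  (rescale_mkAlgHom FF I v c b hb _).trans <| by simp [rescaleFree]; rfl

@[simp] theorem rescale_uK : rescale FF I v c b hb (uK FF I v c i) = uK FF I v c i :=
  (rescale_mkAlgHom FF I v c b hb _).trans <| by simp [rescaleFree]; rfl

@[simp] theorem rescale_uKinv : rescale FF I v c b hb (uKinv FF I v c i) = uKinv FF I v c i :=
  (rescale_mkAlgHom FF I v c b hb _).trans <| by simp [rescaleFree]; rfl

theorem rescale_uB {p q : I → FF} (h : b i * b (τ i) * q i = p i) :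
    rescale FF I v c b hb (uB FF I v c τ p i) = b i • uB FF I v c τ q i := by
  simp only [uB, map_add, map_smul, map_mul, rescale_uF, rescale_uE, rescale_uKinv, smul_add,
    smul_mul_assoc, smul_smul, ← h]
  congr 2
  field_simp [hb (τ i)]

theorem rescale_uk : rescale FF I v c b hb (uk FF I v c τ i) = uk FF I v c τ i := by
  simp [uk]

theorem rescale_ukinv : rescale FF I v c b hb (ukinv FF I v c τ i) = ukinv FF I v c τ i := by
  simp [ukinv]

theorem map_rescale_Ui {p q : I → FF} (h : ∀ i, b i * b (τ i) * q i = p i) :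
    (Ui FF I v c τ p).map (rescale FF I v c b hb : QG FF I v c →ₐ[FF] QG FF I v c)
      = Ui FF I v c τ q := by
  have hB : ⇑(rescale FF I v c b hb) ∘ uB FF I v c τ p = fun i => b i • uB FF I v c τ q i :=
    funext fun i => rescale_uB FF I v c τ b hb i (h i)
  have hk : ⇑(rescale FF I v c b hb) ∘ uk FF I v c τ = uk FF I v c τ :=
    funext (rescale_uk FF I v c τ b hb)
  have hkinv : ⇑(rescale FF I v c b hb) ∘ ukinv FF I v c τ = ukinv FF I v c τ :=
    funext (rescale_ukinv FF I v c τ b hb)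
  rw [Ui, Ui, AlgHom.map_adjoin, Set.image_union, Set.image_union, AlgEquiv.coe_toAlgHom,
    ← Set.range_comp, ← Set.range_comp, ← Set.range_comp, hB, hk, hkinv, Set.union_assoc,
    Set.union_assoc, Algebra.adjoin_range_smul_union hb]

end Rescaling

theorem rescaling_isomorphism_of_iQuantumGroups
    (ς ςd a : I → FF)
    (ha0 : ∀ i, a i ≠ 0)
    (haτ : ∀ i, a (τ i) = a i)
    (ha : ∀ i, a i * a i * ς i = ςd i) :
    ∃ φ : (Ui FF I v c τ ςd) ≃ₐ[FF] (Ui FF I v c τ ς),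
      (∀ i : I, ∀ x : Ui FF I v c τ ςd,
        (x : QG FF I v c) = uB FF I v c τ ςd i →
          ((φ x : Ui FF I v c τ ς) : QG FF I v c) = a i • uB FF I v c τ ς i) ∧
      (∀ j : I, ∀ x : Ui FF I v c τ ςd,
        ((x : QG FF I v c) = uk FF I v c τ j →
          ((φ x : Ui FF I v c τ ς) : QG FF I v c) = uk FF I v c τ j) ∧
        ((x : QG FF I v c) = ukinv FF I v c τ j →
          ((φ x : Ui FF I v c τ ς) : QG FF I v c) = ukinv FF I v c τ j)) := by
  have hparam : ∀ i, a i * a (τ i) * ς i = ςd i := fun i => by rw [haτ, ha]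
  let Φ := rescale FF I v c a ha0
  have hmap := map_rescale_Ui FF I v c τ a ha0 hparam
  refine ⟨(Φ.subalgebraMap _).trans (Subalgebra.equivOfEq _ _ hmap),
    fun i x hx => ?_, fun j x => ⟨fun hx => ?_, fun hx => ?_⟩⟩
  · exact (congrArg Φ hx).trans (rescale_uB FF I v c τ a ha0 i (hparam i))
  · exact (congrArg Φ hx).trans (rescale_uk FF I v c τ a ha0 j)
  · exact (congrArg Φ hx).trans (rescale_ukinv FF I v c τ a ha0 j)

end IQG
end
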